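/- arXiv:2503.00010 — 3 statements merged into one kernel-verified Lean document; each statement's English description precedes it below -/
import Mathlib

section
/- (Horseshoe-type lemma for coresolutions) Let 0 → A → B → C → 0 be a short exact sequence in an abelian category C. Suppose A and C admit exact coresolutions A → A^0 → A^1 → ⋯ and C → C^0 → C^1 → ⋯ (i.e., 0 → A → A^0 → ⋯ exact, similarly for C). If Ext^1(C, A^0) = 0 and Ext^1(K^i_C, A^i) = 0 for all i ≥ 1, where K^i_C denotes the i-th cosyzygy of C, then B admits an exact coresolution B → A^0 ⊕ C^0 → A^1 ⊕ C^1 → ⋯ fitting into a commutative diagram whose rows 0 → A^i → A^i ⊕ C^i → C^i → 0 are the split short exact sequences. -/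
open CategoryTheory CategoryTheory.Limits

universe w v u

/-- `Ext^n(X, Y) = 0` for all `n ≥ 1`. -/
def ExtOrth {C : Type u} [Category.{v} C] [Abelian C] [HasExt.{w} C] (X Y : C) : Prop :=
  ∀ n : ℕ, 1 ≤ n → Subsingleton (Abelian.Ext X Y n)

/-- `0 ⟶ X ⟶ Y ⟶ Z ⟶ 0` is a short exact sequence. -/
def IsShortExactSeq {C : Type u} [Category.{v} C] [Abelian C] {X Y Z : C}
    (f : X ⟶ Y) (g : Y ⟶ Z) : Prop :=
  ∃ w : f ≫ g = 0, (ShortComplex.mk f g w).ShortExact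

/-- The right perpendicular category `T^⊥ = {X | Ext^n(T, X) = 0, n ≥ 1, T ∈ T}`. -/
def rightPerp {C : Type u} [Category.{v} C] [Abelian C] [HasExt.{w} C] (T : Set C) : Set C :=
  {X | ∀ t ∈ T, ExtOrth t X}

/-- The left perpendicular category `^⊥T = {X | Ext^n(X, T) = 0, n ≥ 1, T ∈ T}`. -/
def leftPerp {C : Type u} [Category.{v} C] [Abelian C] [HasExt.{w} C] (T : Set C) : Set C :=
  {X | ∀ t ∈ T, ExtOrth X t}

/-- `N` admits an exact coresolution `0 → N → T⁰ → T¹ → ⋯` with all terms in `T` and all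
cosyzygies (cokernels) in `P`, encoded as chained short exact sequences
`0 → K i → T i → K (i+1) → 0` with `K 0 = N`. -/
def HasCoresolution {C : Type u} [Category.{v} C] [Abelian C] (T P : Set C) (N : C) : Prop :=
  ∃ (K : ℕ → C) (Tt : ℕ → C) (f : ∀ i, K i ⟶ Tt i) (g : ∀ i, Tt i ⟶ K (i + 1)),
    K 0 = N ∧ (∀ i, Tt i ∈ T) ∧ (∀ i, K (i + 1) ∈ P) ∧ ∀ i, IsShortExactSeq (f i) (g i)

/-- `M` admits an exact resolution `⋯ → T₁ → T₀ → M → 0` with all terms in `T` and all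
syzygies (kernels) in `P`, encoded as chained short exact sequences
`0 → K (i+1) → T i → K i → 0` with `K 0 = M`. -/
def HasResolution {C : Type u} [Category.{v} C] [Abelian C] (T P : Set C) (M : C) : Prop :=
  ∃ (K : ℕ → C) (Tt : ℕ → C) (f : ∀ i, K (i + 1) ⟶ Tt i) (g : ∀ i, Tt i ⟶ K i),
    K 0 = M ∧ (∀ i, Tt i ∈ T) ∧ (∀ i, K (i + 1) ∈ P) ∧ ∀ i, IsShortExactSeq (f i) (g i)

/-- The category `X_T` of objects `N` with an exact `T`-coresolution with
`N` and all cosyzygies in `^⊥T`. -/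
def XTCat {C : Type u} [Category.{v} C] [Abelian C] [HasExt.{w} C] (T : Set C) : Set C :=
  {N | N ∈ leftPerp T ∧ HasCoresolution T (leftPerp T) N}

/-- The category `_T X` of objects `M` with an exact `T`-resolution with
`M` and all syzygies in `T^⊥`. -/
def TXCat {C : Type u} [Category.{v} C] [Abelian C] [HasExt.{w} C] (T : Set C) : Set C :=
  {M | M ∈ rightPerp T ∧ HasResolution T (rightPerp T) M}

/-- `T` is Wakamatsu-tilting: it is self-orthogonal and every projective object admits
an exact `T`-coresolution with all cosyzygies in `^⊥T`. -/
def IsWakamatsuTilting {C : Type u} [Category.{v} C] [Abelian C] [HasExt.{w} C]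
    (T : Set C) : Prop :=
  (∀ t ∈ T, ∀ t' ∈ T, ExtOrth t t') ∧
    ∀ P : C, Projective P → HasCoresolution T (leftPerp T) P

/-!
The coresolution of `B` is built one cosyzygy at a time. Given a short exact row
`0 → A → B → Z → 0` and the first steps `A ↪ T ↠ A'`, `Z ↪ U ↠ Z'` of the coresolutions,
the vanishing of `Ext¹(Z, T)` extends `A ↪ T` along `A ↪ B` to some `a : B ⟶ T`. Then
`(a, B ↠ Z ↪ U) : B ⟶ T ⊞ U` is a monomorphism of short exact rows
`(A, B, Z) ⟶ (T, T ⊞ U, U)`, so by the 3 × 3 lemma its cokernel row `0 → A' → B' → Z' → 0`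
is again short exact, and the construction continues with `B'` in place of `B`.
-/

namespace CategoryTheory

open Abelian ZeroObject

variable {C : Type u} [Category.{v} C] [Abelian C]

namespace ShortComplex

lemma ShortExact.exists_lift_of_subsingleton_ext [HasExt.{w} C] {S : ShortComplex C}
    (hS : S.ShortExact) {T : C} (hT : Subsingleton (Ext S.X₃ T 1)) (u : S.X₁ ⟶ T) :
    ∃ v : S.X₂ ⟶ T, S.f ≫ v = u := by
  obtain ⟨e, he⟩ := Ext.contravariant_sequence_exact₁ hS T (Ext.mk₀ u) (add_zero 1)
    (Subsingleton.elim _ _)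
  obtain ⟨v, rfl⟩ := (Ext.mk₀_bijective _ _).2 e
  rw [Ext.mk₀_comp_mk₀] at he
  exact ⟨v, (Ext.mk₀_bijective _ _).1 he⟩

lemma shortExact_of_shortExact_columns {S₁ S₂ S₃ : ShortComplex C} (φ : S₁ ⟶ S₂) (ψ : S₂ ⟶ S₃)
    (h₁ : S₁.ShortExact) (h₂ : S₂.ShortExact) (hc₁ : IsShortExactSeq φ.τ₁ ψ.τ₁)
    (hc₂ : IsShortExactSeq φ.τ₂ ψ.τ₂) (hc₃ : IsShortExactSeq φ.τ₃ ψ.τ₃) : S₃.ShortExact := by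
  obtain ⟨w₁, hc₁⟩ := hc₁
  obtain ⟨w₂, hc₂⟩ := hc₂
  obtain ⟨w₃, hc₃⟩ := hc₃
  have := hc₁.mono_f
  have := hc₂.mono_f
  have := hc₃.mono_f
  let S : SnakeInput C :=
    { L₀ := ShortComplex.mk (0 : (0 : C) ⟶ 0) (0 : (0 : C) ⟶ 0) (by simp)
      L₁ := S₁
      L₂ := S₂
      L₃ := S₃
      v₀₁ := 0
      v₁₂ := φ
      v₂₃ := ψ
      w₀₂ := zero_comp
      w₁₃ := by ext <;> assumption
      h₀ := by
        apply isLimitOfIsLimitπ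
        · exact (KernelFork.isLimitMapConeEquiv _ _).symm
            (KernelFork.IsLimit.ofMonoOfIsZero _ ‹Mono φ.τ₁› (isZero_zero C))
        · exact (KernelFork.isLimitMapConeEquiv _ _).symm
            (KernelFork.IsLimit.ofMonoOfIsZero _ ‹Mono φ.τ₂› (isZero_zero C))
        · exact (KernelFork.isLimitMapConeEquiv _ _).symm
            (KernelFork.IsLimit.ofMonoOfIsZero _ ‹Mono φ.τ₃› (isZero_zero C))
      h₃ := by
        apply isColimitOfIsColimitπ
        · exact (CokernelCofork.isColimitMapCoconeEquiv _ _).symm hc₁.gIsCokernel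
        · exact (CokernelCofork.isColimitMapCoconeEquiv _ _).symm hc₂.gIsCokernel
        · exact (CokernelCofork.isColimitMapCoconeEquiv _ _).symm hc₃.gIsCokernel
      L₁_exact := h₁.exact
      epi_L₁_g := h₁.epi_g
      L₂_exact := h₂.exact
      mono_L₂_f := h₂.mono_f }
  have := h₂.epi_g
  -- the snake lemma's connecting map starts at the zero row, so `S₃.f` is mono
  have hδ : S.δ = 0 := (isZero_zero C).eq_of_src _ _
  exact { exact := S.L₃_exact, mono_f := S.L₂'_exact.mono_g hδ, epi_g := S.epi_L₃_g }

end ShortComplex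

structure ShortExactMiddle (X₁ X₃ : C) where
  X : C
  ι : X₁ ⟶ X
  π : X ⟶ X₃
  isShortExactSeq : IsShortExactSeq ι π

structure HorseshoeStep {A T A' Z U Z' : C} (fA : A ⟶ T) (gA : T ⟶ A') (fC : Z ⟶ U)
    (gC : U ⟶ Z') (s : ShortExactMiddle A Z) where
  next : ShortExactMiddle A' Z'
  f : s.X ⟶ T ⊞ U
  g : T ⊞ U ⟶ next.X
  isShortExactSeq : IsShortExactSeq f g
  fA_inl : fA ≫ biprod.inl = s.ι ≫ f
  f_snd : f ≫ biprod.snd = s.π ≫ fC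
  gA_ι : gA ≫ next.ι = biprod.inl ≫ g
  g_π : g ≫ next.π = biprod.snd ≫ gC

lemma HorseshoeStep.nonempty [HasExt.{w} C] {A T A' Z U Z' : C} {fA : A ⟶ T} {gA : T ⟶ A'}
    {fC : Z ⟶ U} {gC : U ⟶ Z'} (hA : IsShortExactSeq fA gA) (hC : IsShortExactSeq fC gC)
    (s : ShortExactMiddle A Z) (hExt : Subsingleton (Ext Z T 1)) :
    Nonempty (HorseshoeStep fA gA fC gC s) := by
  obtain ⟨wA, hA⟩ := hA
  obtain ⟨wC, hC⟩ := hC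
  obtain ⟨ws, hs⟩ := s.isShortExactSeq
  have := hs.mono_f
  have := hA.mono_f
  have := hA.epi_g
  have := hC.mono_f
  obtain ⟨a, ha⟩ := hs.exists_lift_of_subsingleton_ext hExt fA
  let φ : ShortComplex.mk s.ι s.π ws ⟶ ShortComplex.mk biprod.inl biprod.snd biprod.inl_snd :=
    { τ₁ := fA
      τ₂ := biprod.lift a (s.π ≫ fC)
      τ₃ := fC
      comm₁₂ := by ext <;> simp [ha, reassoc_of% ws] }
  have : Mono φ.τ₂ := ShortComplex.mono_τ₂_of_exact_of_mono φ hs.exact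
  set t := φ.τ₂
  have hφ₁ : fA ≫ biprod.inl = s.ι ≫ t := φ.comm₁₂
  obtain ⟨u, hu⟩ := hA.exact.desc' (biprod.inl ≫ cokernel.π t)
    (by rw [reassoc_of% hφ₁, cokernel.condition, comp_zero])
  let v := cokernel.desc t (biprod.snd ≫ gC) (by simp [t, φ, wC])
  have huv : u ≫ v = 0 := by
    rw [← cancel_epi gA]
    simp [reassoc_of% hu, v]
  let ψ : ShortComplex.mk biprod.inl biprod.snd biprod.inl_snd ⟶ ShortComplex.mk u v huv :=
    { τ₁ := gA
      τ₂ := cokernel.π t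
      τ₃ := gC
      comm₁₂ := hu
      comm₂₃ := by simp [v] }
  have ht : IsShortExactSeq t (cokernel.π t) :=
    ⟨cokernel.condition t,
      { exact := ShortComplex.exact_of_g_is_cokernel _ (cokernelIsCokernel t)
        mono_f := inferInstance
        epi_g := inferInstance }⟩
  have hnext : (ShortComplex.mk u v huv).ShortExact :=
    ShortComplex.shortExact_of_shortExact_columns φ ψ hs
      (ShortComplex.Splitting.ofHasBinaryBiproduct T U).shortExact ⟨wA, hA⟩ ht ⟨wC, hC⟩
  exact ⟨{
    next := ⟨cokernel t, u, v, huv, hnext⟩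
    f := t
    g := cokernel.π t
    isShortExactSeq := ht
    fA_inl := hφ₁
    f_snd := φ.comm₂₃
    gA_ι := hu
    g_π := ψ.comm₂₃ }⟩

end CategoryTheory

theorem stmt4 {C : Type u} [Category.{v} C] [Abelian C] [HasExt.{w} C]
    (KA TA : ℕ → C) (fA : ∀ i, KA i ⟶ TA i) (gA : ∀ i, TA i ⟶ KA (i + 1))
    (hA : ∀ i, IsShortExactSeq (fA i) (gA i))
    (KC TC : ℕ → C) (fC : ∀ i, KC i ⟶ TC i) (gC : ∀ i, TC i ⟶ KC (i + 1))
    (hC : ∀ i, IsShortExactSeq (fC i) (gC i))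
    (B : C) (x : KA 0 ⟶ B) (y : B ⟶ KC 0) (hxy : IsShortExactSeq x y)
    (h0 : Subsingleton (Abelian.Ext (KC 0) (TA 0) 1))
    (hi : ∀ i : ℕ, 1 ≤ i → Subsingleton (Abelian.Ext (KC i) (TA i) 1)) :
    ∃ (KB : ℕ → C) (fB : ∀ i, KB i ⟶ TA i ⊞ TC i) (gB : ∀ i, TA i ⊞ TC i ⟶ KB (i + 1))
      (p : ∀ i, KA i ⟶ KB i) (q : ∀ i, KB i ⟶ KC i) (e : KB 0 ≅ B),
      (∀ i, IsShortExactSeq (fB i) (gB i)) ∧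
      (∀ i, IsShortExactSeq (p i) (q i)) ∧
      p 0 ≫ e.hom = x ∧ e.hom ≫ y = q 0 ∧
      (∀ i, fA i ≫ biprod.inl = p i ≫ fB i) ∧
      (∀ i, fB i ≫ biprod.snd = q i ≫ fC i) ∧
      (∀ i, gA i ≫ p (i + 1) = biprod.inl ≫ gB i) ∧
      (∀ i, gB i ≫ q (i + 1) = biprod.snd ≫ gC i) := by
  have hExt : ∀ i, Subsingleton (Abelian.Ext (KC i) (TA i) 1)
    | 0 => h0
    | i + 1 => hi (i + 1) i.succ_pos
  let step (i : ℕ) (s : ShortExactMiddle (KA i) (KC i)) :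
      HorseshoeStep (fA i) (gA i) (fC i) (gC i) s :=
    Classical.choice (HorseshoeStep.nonempty (hA i) (hC i) s (hExt i))
  let row (i : ℕ) : ShortExactMiddle (KA i) (KC i) :=
    Nat.rec ⟨B, x, y, hxy⟩ (fun i s => (step i s).next) i
  exact ⟨fun i => (row i).X, fun i => (step i (row i)).f, fun i => (step i (row i)).g,
    fun i => (row i).ι, fun i => (row i).π, Iso.refl B,
    fun i => (step i (row i)).isShortExactSeq, fun i => (row i).isShortExactSeq,
    Category.comp_id x, Category.id_comp y,
    fun i => (step i (row i)).fA_inl, fun i => (step i (row i)).f_snd,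
    fun i => (step i (row i)).gA_ι, fun i => (step i (row i)).g_π⟩
end

section
/- In a recollement (A, B, C) of abelian categories, if i^* is exact then i^! j_! = 0, and if i^! is exact then i^* j_* = 0. -/
/-
Adjunction turns `i^* j_! = 0` and `i^! j_* = 0` into `j^* i_* = 0`, which is `Im i_* ⊆ Ker j^*`.
If `i^*` is exact, applying it to the monomorphism `i_* i^! j_! X ↪ j_! X` embeds
`i^* i_* i^! j_! X ≅ i^! j_! X` into `i^* j_! X = 0`; the second claim is dual, using the
epimorphism `j_* X ↠ i_* i^* j_* X` and `i^! i_* ≅ id`.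
-/

open CategoryTheory CategoryTheory.Limits

universe w₁ w₂ w₃ v₁ v₂ v₃ u₁ u₂ u₃

/-- A recollement of abelian categories `(A, B, C)`. -/
structure AbRecollement (A : Type u₁) (B : Type u₂) (C : Type u₃)
    [Category.{v₁} A] [Category.{v₂} B] [Category.{v₃} C]
    [Abelian A] [Abelian B] [Abelian C] where
  /-- `i_* : A ⥤ B` -/
  iStar : A ⥤ B
  /-- `i^* : B ⥤ A` -/
  iUp : B ⥤ A
  /-- `i^! : B ⥤ A` -/
  iShriek : B ⥤ A
  /-- `j^* : B ⥤ C` -/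
  jUp : B ⥤ C
  /-- `j_! : C ⥤ B` -/
  jLow : C ⥤ B
  /-- `j_* : C ⥤ B` -/
  jStar : C ⥤ B
  adj₁ : iUp ⊣ iStar
  adj₂ : iStar ⊣ iShriek
  adj₃ : jLow ⊣ jUp
  adj₄ : jUp ⊣ jStar
  iStar_lexact : PreservesFiniteLimits iStar
  iStar_rexact : PreservesFiniteColimits iStar
  jUp_lexact : PreservesFiniteLimits jUp
  jUp_rexact : PreservesFiniteColimits jUp
  iUp_rexact : PreservesFiniteColimits iUp
  jLow_rexact : PreservesFiniteColimits jLow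
  iShriek_lexact : PreservesFiniteLimits iShriek
  jStar_lexact : PreservesFiniteLimits jStar
  iStar_full : iStar.Full
  iStar_faithful : iStar.Faithful
  jLow_full : jLow.Full
  jLow_faithful : jLow.Faithful
  jStar_full : jStar.Full
  jStar_faithful : jStar.Faithful
  /-- `Im i_* = Ker j^*` -/
  im_eq_ker : ∀ X : B, (∃ Y : A, Nonempty (iStar.obj Y ≅ X)) ↔ Limits.IsZero (jUp.obj X)
  /-- the exact sequence `0 → i_* i^! X → X → j_* j^* X` given by the adjunctions -/
  seq₁ : ∀ X : B, ∃ w : adj₂.counit.app X ≫ adj₄.unit.app X = 0,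
    Mono (adj₂.counit.app X) ∧
      (ShortComplex.mk (adj₂.counit.app X) (adj₄.unit.app X) w).Exact
  /-- the exact sequence `j_! j^* X → X → i_* i^* X → 0` given by the adjunctions -/
  seq₂ : ∀ X : B, ∃ w : adj₃.counit.app X ≫ adj₁.unit.app X = 0,
    Epi (adj₁.unit.app X) ∧
      (ShortComplex.mk (adj₃.counit.app X) (adj₁.unit.app X) w).Exact

variable {A : Type u₁} {B : Type u₂} {C : Type u₃}
  [Category.{v₁} A] [Category.{v₂} B] [Category.{v₃} C]
  [Abelian A] [Abelian B] [Abelian C]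

namespace CategoryTheory.Adjunction

variable {D : Type*} {E : Type*} [Category D] [Category E] {L : D ⥤ E} {R : E ⥤ D}

lemma isZero_left_obj_of_isZero_right_obj [HasZeroMorphisms E] (adj : L ⊣ R)
    (h : ∀ Y, IsZero (R.obj Y)) (X : D) : IsZero (L.obj X) := by
  rw [IsZero.iff_id_eq_zero]
  exact (adj.homEquiv _ _).injective ((h _).eq_of_tgt _ _)

lemma isZero_right_obj_of_isZero_left_obj [HasZeroMorphisms D] (adj : L ⊣ R)
    (h : ∀ X, IsZero (L.obj X)) (Y : E) : IsZero (R.obj Y) := by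
  rw [IsZero.iff_id_eq_zero]
  exact (adj.homEquiv _ _).symm.injective ((h _).eq_of_src _ _)

end CategoryTheory.Adjunction

namespace AbRecollement

variable (R : AbRecollement A B C)

lemma isZero_jUp_obj_iStar_obj (Y : A) : IsZero (R.jUp.obj (R.iStar.obj Y)) :=
  (R.im_eq_ker _).mp ⟨Y, ⟨Iso.refl _⟩⟩

lemma isZero_iUp_obj_jLow_obj (X : C) : IsZero (R.iUp.obj (R.jLow.obj X)) :=
  (R.adj₃.comp R.adj₁).isZero_left_obj_of_isZero_right_obj R.isZero_jUp_obj_iStar_obj X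

lemma isZero_iShriek_obj_jStar_obj (X : C) : IsZero (R.iShriek.obj (R.jStar.obj X)) :=
  (R.adj₂.comp R.adj₄).isZero_right_obj_of_isZero_left_obj R.isZero_jUp_obj_iStar_obj X

lemma isZero_iShriek_obj_jLow_obj [PreservesFiniteLimits R.iUp] (X : C) :
    IsZero (R.iShriek.obj (R.jLow.obj X)) := by
  have := R.iStar_full
  have := R.iStar_faithful
  obtain ⟨-, hmono, -⟩ := R.seq₁ (R.jLow.obj X)
  exact ((R.isZero_iUp_obj_jLow_obj X).of_mono (R.iUp.map (R.adj₂.counit.app _))).of_iso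
    (asIso (R.adj₁.counit.app _)).symm

lemma isZero_iUp_obj_jStar_obj [PreservesFiniteColimits R.iShriek] (X : C) :
    IsZero (R.iUp.obj (R.jStar.obj X)) := by
  have := R.iStar_full
  have := R.iStar_faithful
  obtain ⟨-, hepi, -⟩ := R.seq₂ (R.jStar.obj X)
  exact ((R.isZero_iShriek_obj_jStar_obj X).of_epi (R.iShriek.map (R.adj₁.unit.app _))).of_iso
    (asIso (R.adj₂.unit.app _))

end AbRecollement

theorem stmt11 (R : AbRecollement A B C) :
    (PreservesFiniteLimits R.iUp →
      ∀ X : C, Limits.IsZero (R.iShriek.obj (R.jLow.obj X))) ∧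
    (PreservesFiniteColimits R.iShriek →
      ∀ X : C, Limits.IsZero (R.iUp.obj (R.jStar.obj X))) :=
  ⟨fun _ => R.isZero_iShriek_obj_jLow_obj, fun _ => R.isZero_iUp_obj_jStar_obj⟩
end

section
/- Let C be an abelian category with enough projectives and injectives and T a Wakamatsu-tilting subcategory. Then T = ^⊥(_T X) ∩ _T X, where _T X is the category of objects M admitting an exact T-resolution with all syzygies in T^⊥; i.e., T consists exactly of the objects of _T X that are Ext-orthogonal to all of _T X from the left. -/
open CategoryTheory CategoryTheory.Limits

universe w v u

/-!
If `M ∈ _T X`, the first step `0 → K → T₀ → M → 0` of its resolution has `K ∈ _T X`, so when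
moreover `M ∈ ^⊥(_T X)` it splits and `M` is a direct summand of `T₀ ∈ T`. Conversely, each
`t ∈ T` is its own resolution, and `_T X ⊆ T^⊥` puts `t` in `^⊥(_T X)`.
-/

open CategoryTheory.Abelian ZeroObject

section

variable {C : Type u} [Category.{v} C] [Abelian C]

lemma extOrth_of_injective [HasExt.{w} C] (X I : C) [Injective I] : ExtOrth X I := by
  rintro (_ | n) hn
  · omega
  · exact Ext.subsingleton_of_injective X I n

lemma zero_mem_rightPerp [HasExt.{w} C] (T : Set C) : (0 : C) ∈ rightPerp T :=
  fun t _ => extOrth_of_injective t 0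

lemma isShortExactSeq_zero_left {X Y : C} (e : X ≅ Y) :
    IsShortExactSeq (0 : (0 : C) ⟶ X) e.hom :=
  ⟨by simp, ShortComplex.Splitting.shortExact
    { r := 0
      s := e.inv
      f_r := Subsingleton.elim _ _
      s_g := by simp
      id := by simp }⟩

lemma hasResolution_of_mem {T P : Set C} {X : C} (hX : X ∈ T) (hT : (0 : C) ∈ T)
    (hP : (0 : C) ∈ P) : HasResolution T P X := by
  let K : ℕ → C := fun | 0 => X | _ + 1 => 0
  exact ⟨K, K, fun _ => 0, fun i => 𝟙 (K i), rfl, fun | 0 => hX | _ + 1 => hT, fun _ => hP,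
    fun i => isShortExactSeq_zero_left (Iso.refl (K i))⟩

lemma exists_section_of_isShortExactSeq [HasExt.{w} C] {X Y Z : C} {f : X ⟶ Y} {g : Y ⟶ Z}
    (hfg : IsShortExactSeq f g) (hExt : Subsingleton (Ext.{w} Z X 1)) :
    ∃ s : Z ⟶ Y, s ≫ g = 𝟙 Z := by
  obtain ⟨_, hS⟩ := hfg
  obtain ⟨x, hx⟩ := Ext.covariant_sequence_exact₃ Z hS (Ext.mk₀ (𝟙 Z)) rfl
    (Subsingleton.elim _ _)
  obtain ⟨s, rfl⟩ := (Ext.mk₀_bijective Z Y).2 x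
  exact ⟨s, (Ext.mk₀_bijective Z Z).1 (by simpa only [Ext.mk₀_comp_mk₀] using hx)⟩

lemma exists_isShortExactSeq_of_mem_TXCat [HasExt.{w} C] {T : Set C} {M : C}
    (hM : M ∈ TXCat T) :
    ∃ (K T₀ : C) (f : K ⟶ T₀) (g : T₀ ⟶ M), T₀ ∈ T ∧ K ∈ TXCat T ∧ IsShortExactSeq f g := by
  obtain ⟨-, K, Tt, f, g, rfl, hTt, hK, hfg⟩ := hM
  exact ⟨K 1, Tt 0, f 0, g 0, hTt 0,
    ⟨hK 0, fun i => K (i + 1), fun i => Tt (i + 1), fun i => f (i + 1), fun i => g (i + 1),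
      rfl, fun i => hTt (i + 1), fun i => hK (i + 1), fun i => hfg (i + 1)⟩, hfg 0⟩

end

theorem stmt16_general {C : Type u} [Category.{v} C] [Abelian C] [HasExt.{w} C]
    (T : Set C)
    (hsum : ∀ X ∈ T, ∀ Y : C, (∃ (s : Y ⟶ X) (r : X ⟶ Y), s ≫ r = 𝟙 Y) → Y ∈ T)
    (horth : ∀ t ∈ T, ∀ t' ∈ T, ExtOrth t t') :
    T = leftPerp (TXCat T) ∩ TXCat T := by
  apply Set.Subset.antisymm
  · intro t ht
    have hzero : (0 : C) ∈ T := hsum t ht 0 ⟨0, 0, Subsingleton.elim _ _⟩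
    exact ⟨fun M hM => hM.1 t ht, fun t' ht' => horth t' ht' t ht,
      hasResolution_of_mem ht hzero (zero_mem_rightPerp T)⟩
  · rintro M ⟨hMperp, hM⟩
    obtain ⟨K, T₀, f, g, hT₀, hK, hfg⟩ := exists_isShortExactSeq_of_mem_TXCat hM
    obtain ⟨s, hs⟩ := exists_section_of_isShortExactSeq hfg (hMperp K hK 1 le_rfl)
    exact hsum T₀ hT₀ M ⟨s, g, hs⟩

theorem stmt16 {C : Type u} [Category.{v} C] [Abelian C] [HasExt.{w} C]
    [EnoughProjectives C] [EnoughInjectives C]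
    (T : Set C)
    (hadd : ∀ X ∈ T, ∀ Y ∈ T, (X ⊞ Y) ∈ T)
    (hsum : ∀ X ∈ T, ∀ Y : C, (∃ (s : Y ⟶ X) (r : X ⟶ Y), s ≫ r = 𝟙 Y) → Y ∈ T)
    (horth : ∀ t ∈ T, ∀ t' ∈ T, ExtOrth t t')
    (hproj : ∀ P : C, Projective P → HasCoresolution T (leftPerp T) P) :
    T = leftPerp (TXCat T) ∩ TXCat T :=
  stmt16_general T hsum horth
end
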